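/- Fix a real parameter g with −2 < g < 2 and set h = √(1 − g²/4), G = g/h. Then the piecewise-defined Finsleroid function f is infinitely differentiable (C^∞) on the open half-plane {(b,q) ∈ ℝ² : q > 0}, and consequently the Finsleroid-regular metric function K is C^∞ and positive on {(b,q) : q > 0}. -/

import Mathlib

noncomputable def finsH (g : ℝ) : ℝ := Real.sqrt (1 - g ^ 2 / 4)

noncomputable def finsG (g : ℝ) : ℝ := g / finsH g

noncomputable def finsB (g b q : ℝ) : ℝ := b ^ 2 + g * q * b + q ^ 2

noncomputable def finsL (g b q : ℝ) : ℝ := q + (g / 2) * b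

noncomputable def finsF (g b q : ℝ) : ℝ :=
  if 0 < b then -Real.arctan (finsG g / 2) + Real.arctan (finsL g b q / (finsH g * b))
  else if b < 0 then
    Real.pi - Real.arctan (finsG g / 2) + Real.arctan (finsL g b q / (finsH g * b))
  else Real.pi / 2 - Real.arctan (finsG g / 2)

noncomputable def finsK (g b q : ℝ) : ℝ :=
  Real.sqrt (finsB g b q) * Real.exp (-(finsG g / 2) * finsF g b q)

lemma finsH_pos {g : ℝ} (hg1 : -2 < g) (hg2 : g < 2) : 0 < finsH g := by
  unfold finsH; apply Real.sqrt_pos.2; nlinarith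

lemma finsB_pos {g : ℝ} (hg1 : -2 < g) (hg2 : g < 2) {b q : ℝ} (hq : 0 < q) :
    0 < finsB g b q := by
  unfold finsB
  nlinarith [sq_nonneg (2 * b + g * q),
    mul_pos (mul_pos (by linarith : (0:ℝ) < 2 - g) (by linarith : (0:ℝ) < 2 + g))
      (mul_pos hq hq)]

/-- The complex point whose argument describes `finsF`. -/
noncomputable def finsW (g b q : ℝ) : ℂ :=
  (finsL g b q : ℂ) + (-(finsH g * b) : ℝ) * Complex.I

lemma finsW_re (g b q : ℝ) : (finsW g b q).re = finsL g b q := by simp [finsW]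

lemma finsW_im (g b q : ℝ) : (finsW g b q).im = -(finsH g * b) := by simp [finsW]

lemma arg_finsW {g : ℝ} (hg1 : -2 < g) (hg2 : g < 2) {b q : ℝ} (hq : 0 < q) :
    (finsW g b q).arg = finsF g b q - (Real.pi / 2 - Real.arctan (finsG g / 2)) := by
  have hh : 0 < finsH g := finsH_pos hg1 hg2
  set h := finsH g with hhdef
  set L := finsL g b q with hL
  rcases lt_trichotomy b 0 with hb | hb | hb
  · -- b < 0
    set x := L / (h * b) with hx
    clear_value x L h
    have hhb : h * b < 0 := mul_neg_of_pos_of_neg hh hb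
    have hs : (0:ℝ) < Real.sqrt (1 + x ^ 2) := Real.sqrt_pos.2 (by positivity)
    have hs2 : Real.sqrt (1 + x ^ 2) ^ 2 = 1 + x ^ 2 := Real.sq_sqrt (by positivity)
    have hxb : x * (h * b) = L := by
      rw [hx, div_mul_cancel₀ _ hhb.ne]
    have hsq : (Real.sqrt (1 + x ^ 2)) ^ 2 * (h * b) ^ 2 = L ^ 2 + (h * b) ^ 2 := by
      rw [hs2]; linear_combination (x * (h * b) + L) * hxb
    have hr : Real.sqrt (L ^ 2 + (h * b) ^ 2)
        = Real.sqrt (1 + x ^ 2) * (-(h * b)) := by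
      rw [show L ^ 2 + (h * b) ^ 2 = (Real.sqrt (1 + x ^ 2) * (-(h * b))) ^ 2 by
        linear_combination -hsq]
      exact Real.sqrt_sq (by nlinarith)
    have hrpos : (0:ℝ) < Real.sqrt (L ^ 2 + (h * b) ^ 2) := by
      rw [hr]; nlinarith
    have hre : L = Real.sqrt (L ^ 2 + (h * b) ^ 2)
        * Real.cos (Real.arctan x + Real.pi / 2) := by
      rw [hr, Real.cos_add_pi_div_two, Real.sin_arctan]
      field_simp
      linear_combination -hxb
    have him : -(h * b) = Real.sqrt (L ^ 2 + (h * b) ^ 2)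
        * Real.sin (Real.arctan x + Real.pi / 2) := by
      rw [hr, Real.sin_add_pi_div_two, Real.cos_arctan]
      field_simp
    have key : finsW g b q
        = (Real.sqrt (L ^ 2 + (h * b) ^ 2) : ℂ) *
          (Complex.cos ((Real.arctan x + Real.pi / 2 : ℝ) : ℂ)
            + Complex.sin ((Real.arctan x + Real.pi / 2 : ℝ) : ℂ) * Complex.I) := by
      rw [← Complex.ofReal_cos, ← Complex.ofReal_sin]
      apply Complex.ext
      · rw [finsW_re, ← hL]
        simp only [Complex.mul_re, Complex.mul_im, Complex.add_re, Complex.add_im,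
        Complex.ofReal_re, Complex.ofReal_im, Complex.I_re, Complex.I_im, mul_zero,
        zero_mul, mul_one, sub_zero, add_zero, zero_add, zero_sub, neg_zero]
        exact hre
      · rw [finsW_im, ← hhdef]
        simp only [Complex.mul_re, Complex.mul_im, Complex.add_re, Complex.add_im,
        Complex.ofReal_re, Complex.ofReal_im, Complex.I_re, Complex.I_im, mul_zero,
        zero_mul, mul_one, sub_zero, add_zero, zero_add, zero_sub, neg_zero]
        exact him
    rw [key, Complex.arg_mul_cos_add_sin_mul_I hrpos
        ⟨by nlinarith [Real.neg_pi_div_two_lt_arctan x, Real.pi_pos],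
         by nlinarith [Real.arctan_lt_pi_div_two x]⟩]
    simp only [finsF, if_neg (lt_asymm hb), if_pos hb, ← hL, ← hhdef, ← hx]
    ring
  · -- b = 0
    subst hb
    have : finsW g 0 q = (q : ℂ) := by
      simp [finsW, finsL]
    rw [this, Complex.arg_ofReal_of_nonneg hq.le]
    simp [finsF]
  · -- b > 0
    set x := L / (h * b) with hx
    clear_value x L h
    have hhb : 0 < h * b := mul_pos hh hb
    have hs : (0:ℝ) < Real.sqrt (1 + x ^ 2) := Real.sqrt_pos.2 (by positivity)
    have hs2 : Real.sqrt (1 + x ^ 2) ^ 2 = 1 + x ^ 2 := Real.sq_sqrt (by positivity)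
    have hxb : x * (h * b) = L := by
      rw [hx, div_mul_cancel₀ _ hhb.ne']
    have hsq : (Real.sqrt (1 + x ^ 2)) ^ 2 * (h * b) ^ 2 = L ^ 2 + (h * b) ^ 2 := by
      rw [hs2]; linear_combination (x * (h * b) + L) * hxb
    have hr : Real.sqrt (L ^ 2 + (h * b) ^ 2)
        = Real.sqrt (1 + x ^ 2) * (h * b) := by
      rw [show L ^ 2 + (h * b) ^ 2 = (Real.sqrt (1 + x ^ 2) * (h * b)) ^ 2 by
        linear_combination -hsq]
      exact Real.sqrt_sq (by positivity)
    have hrpos : (0:ℝ) < Real.sqrt (L ^ 2 + (h * b) ^ 2) := by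
      rw [hr]; positivity
    have hre : L = Real.sqrt (L ^ 2 + (h * b) ^ 2)
        * Real.cos (Real.arctan x - Real.pi / 2) := by
      rw [hr, Real.cos_sub_pi_div_two, Real.sin_arctan]
      field_simp
      linear_combination -hxb
    have him : -(h * b) = Real.sqrt (L ^ 2 + (h * b) ^ 2)
        * Real.sin (Real.arctan x - Real.pi / 2) := by
      rw [hr, Real.sin_sub_pi_div_two, Real.cos_arctan]
      field_simp
    have key : finsW g b q
        = (Real.sqrt (L ^ 2 + (h * b) ^ 2) : ℂ) *
          (Complex.cos ((Real.arctan x - Real.pi / 2 : ℝ) : ℂ)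
            + Complex.sin ((Real.arctan x - Real.pi / 2 : ℝ) : ℂ) * Complex.I) := by
      rw [← Complex.ofReal_cos, ← Complex.ofReal_sin]
      apply Complex.ext
      · rw [finsW_re, ← hL]
        simp only [Complex.mul_re, Complex.mul_im, Complex.add_re, Complex.add_im,
        Complex.ofReal_re, Complex.ofReal_im, Complex.I_re, Complex.I_im, mul_zero,
        zero_mul, mul_one, sub_zero, add_zero, zero_add, zero_sub, neg_zero]
        exact hre
      · rw [finsW_im, ← hhdef]
        simp only [Complex.mul_re, Complex.mul_im, Complex.add_re, Complex.add_im,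
        Complex.ofReal_re, Complex.ofReal_im, Complex.I_re, Complex.I_im, mul_zero,
        zero_mul, mul_one, sub_zero, add_zero, zero_add, zero_sub, neg_zero]
        exact him
    rw [key, Complex.arg_mul_cos_add_sin_mul_I hrpos
        ⟨by nlinarith [Real.neg_pi_div_two_lt_arctan x, Real.pi_pos],
         by nlinarith [Real.arctan_lt_pi_div_two x, Real.pi_pos]⟩]
    simp only [finsF, if_pos hb, ← hL, ← hhdef, ← hx]
    ring

lemma finsW_contDiff (g : ℝ) :
    ContDiff ℝ (⊤ : ℕ∞) (fun p : ℝ × ℝ => finsW g p.1 p.2) := by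
  have h1 : ContDiff ℝ (⊤ : ℕ∞) (fun p : ℝ × ℝ => finsL g p.1 p.2) := by
    unfold finsL
    exact contDiff_snd.add (contDiff_const.mul contDiff_fst)
  have h2 : ContDiff ℝ (⊤ : ℕ∞) (fun p : ℝ × ℝ => -(finsH g * p.1)) :=
    (contDiff_const.mul contDiff_fst).neg
  unfold finsW
  exact (Complex.ofRealCLM.contDiff.comp h1).add
    ((Complex.ofRealCLM.contDiff.comp h2).mul contDiff_const)

lemma finsW_mem_slitPlane {g : ℝ} (hg1 : -2 < g) (hg2 : g < 2) {b q : ℝ} (hq : 0 < q) :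
    finsW g b q ∈ Complex.slitPlane := by
  rw [Complex.mem_slitPlane_iff, finsW_re, finsW_im]
  rcases eq_or_ne b 0 with hb | hb
  · left; simp [finsL, hb, hq]
  · right
    have := (finsH_pos hg1 hg2).ne'
    simp [this, hb]

lemma finsF_contDiffOn {g : ℝ} (hg1 : -2 < g) (hg2 : g < 2) :
    ContDiffOn ℝ (⊤ : ℕ∞) (fun p : ℝ × ℝ => finsF g p.1 p.2) {p : ℝ × ℝ | 0 < p.2} := by
  have key : ∀ p : ℝ × ℝ, 0 < p.2 →
      finsF g p.1 p.2 = (Complex.log (finsW g p.1 p.2)).im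
        + (Real.pi / 2 - Real.arctan (finsG g / 2)) := by
    intro p hp
    rw [Complex.log_im, arg_finsW hg1 hg2 hp]
    ring
  apply ContDiffOn.congr _ fun p hp => key p hp
  intro p hp
  apply ContDiffWithinAt.add _ contDiffWithinAt_const
  apply ContDiffAt.contDiffWithinAt
  exact (Complex.imCLM.contDiff.contDiffAt).comp p
    (((Complex.contDiffAt_log (finsW_mem_slitPlane hg1 hg2 hp)).restrict_scalars ℝ).comp p
      (finsW_contDiff g).contDiffAt)

/-- the Finsleroid function `f` is `C^∞` on the open half-plane
`{(b,q) : q > 0}`, and consequently `K` is `C^∞` and positive there. -/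
theorem finsleroid_f_K_smooth (g : ℝ) (hg1 : -2 < g) (hg2 : g < 2) :
    ContDiffOn ℝ (⊤ : ℕ∞) (fun p : ℝ × ℝ => finsF g p.1 p.2) {p : ℝ × ℝ | 0 < p.2} ∧
    ContDiffOn ℝ (⊤ : ℕ∞) (fun p : ℝ × ℝ => finsK g p.1 p.2) {p : ℝ × ℝ | 0 < p.2} ∧
    ∀ p : ℝ × ℝ, 0 < p.2 → 0 < finsK g p.1 p.2 := by
  have hF := finsF_contDiffOn hg1 hg2
  have hBpos : ∀ p : ℝ × ℝ, p ∈ {p : ℝ × ℝ | 0 < p.2} → finsB g p.1 p.2 ≠ 0 :=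
    fun p hp => (finsB_pos hg1 hg2 hp).ne'
  have hBcd : ContDiff ℝ (⊤ : ℕ∞) (fun p : ℝ × ℝ => finsB g p.1 p.2) := by
    have h1 : ContDiff ℝ (⊤ : ℕ∞) (fun p : ℝ × ℝ => p.1) := contDiff_fst
    have h2 : ContDiff ℝ (⊤ : ℕ∞) (fun p : ℝ × ℝ => p.2) := contDiff_snd
    unfold finsB
    exact (((h1.pow 2).add ((contDiff_const.mul h2).mul h1)).add (h2.pow 2))
  refine ⟨hF, ?_, ?_⟩
  · unfold finsK
    apply ContDiffOn.mul
    · intro p hp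
      exact ((Real.contDiffAt_sqrt (hBpos p hp)).comp p hBcd.contDiffAt).contDiffWithinAt
    · exact Real.contDiff_exp.comp_contDiffOn (contDiffOn_const.mul hF)
  · intro p hp
    unfold finsK
    exact mul_pos (Real.sqrt_pos.2 (finsB_pos hg1 hg2 hp)) (Real.exp_pos _)
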